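/- Let G be a connected unicyclic graph on n vertices that has a vertex of degree at least 3 not lying on the unique cycle of G. Then no enumeration of the edge-binomials of G forms a d-sequence in S; that is, the edge-binomials of G do not form a d-sequence. -/

import Mathlib

open MvPolynomial

/-- The edge-binomial `f_{ij} = x_i * y_j - x_j * y_i` in
`S = k[x_1,…,x_n,y_1,…,y_n]`, realized as `MvPolynomial (Fin n ⊕ Fin n) k`
with `x_i = X (Sum.inl i)` and `y_i = X (Sum.inr i)`. -/
noncomputable def edgeBinomial (k : Type) [Field k] {n : ℕ} (i j : Fin n) :
    MvPolynomial (Fin n ⊕ Fin n) k :=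
  X (Sum.inl i) * X (Sum.inr j) - X (Sum.inl j) * X (Sum.inr i)

/-- The parity edge-binomial `g_{ij} = x_i * x_j - y_i * y_j`. -/
noncomputable def parityBinomial (k : Type) [Field k] {n : ℕ} (i j : Fin n) :
    MvPolynomial (Fin n ⊕ Fin n) k :=
  X (Sum.inl i) * X (Sum.inl j) - X (Sum.inr i) * X (Sum.inr j)

/-- `a 0, …, a (m-1)` is a d-sequence: it is a minimal system of generators of the
ideal it generates, and `((a_0,…,a_{i-1}) : a_i * a_j) = ((a_0,…,a_{i-1}) : a_j)`
for all `i ≤ j`. -/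
def IsDSequence {R : Type*} [CommRing R] {m : ℕ} (a : Fin m → R) : Prop :=
  (∀ i : Fin m, a i ∉ Ideal.span (a '' {j | j ≠ i})) ∧
  ∀ i j : Fin m, i ≤ j →
    Submodule.colon (Ideal.span (a '' {l | l < i})) (Ideal.span {a i * a j}) =
      Submodule.colon (Ideal.span (a '' {l | l < i})) (Ideal.span {a j})

/-- `α, β : Fin N → Fin n` is an enumeration (with a choice of orientation) of the
edges of the graph `G`. -/
def IsEdgeEnumeration {n N : ℕ} (G : SimpleGraph (Fin n)) (α β : Fin N → Fin n) : Prop :=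
  (∀ t, G.Adj (α t) (β t)) ∧
  (∀ e ∈ G.edgeSet, ∃ t, e = s(α t, β t)) ∧
  Function.Injective (fun t => (s(α t, β t) : Sym2 (Fin n)))

/-- The edge-binomials of `G` form a d-sequence (for some enumeration of the edges). -/
def EdgeBinomialsFormDSequence (k : Type) [Field k] {n : ℕ} (G : SimpleGraph (Fin n)) : Prop :=
  ∃ (N : ℕ) (α β : Fin N → Fin n), IsEdgeEnumeration G α β ∧
    IsDSequence (fun t => edgeBinomial k (α t) (β t))

/-- The parity edge-binomials of `G` form a d-sequence. -/
def ParityBinomialsFormDSequence (k : Type) [Field k] {n : ℕ} (G : SimpleGraph (Fin n)) : Prop :=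
  ∃ (N : ℕ) (α β : Fin N → Fin n), IsEdgeEnumeration G α β ∧
    IsDSequence (fun t => parityBinomial k (α t) (β t))

/-- A graph is unicyclic if it contains exactly one cycle, i.e. there is a unique
set of edges which is the edge set of some cycle. -/
def IsUnicyclic {V : Type*} (G : SimpleGraph V) : Prop :=
  ∃! s : Set (Sym2 V), ∃ (v : V) (w : G.Walk v v), w.IsCycle ∧ s = {e | e ∈ w.edges}

/-- The degree of a vertex (number of neighbours). -/
noncomputable def degr {V : Type*} (G : SimpleGraph V) (v : V) : ℕ := (G.neighborSet v).ncard

/-- `H` belongs to the class `T_m` with center `k0`: `H` is a tree, the center has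
degree `m`, and every other vertex has degree at most `2`. -/
def IsTmTree {n : ℕ} (H : SimpleGraph (Fin n)) (m : ℕ) (k0 : Fin n) : Prop :=
  H.IsTree ∧ degr H k0 = m ∧ ∀ v : Fin n, v ≠ k0 → degr H v ≤ 2

/-- The graph obtained from `G` by adding the edge `{u, v}`. -/
def addEdge {V : Type*} (G : SimpleGraph V) (u v : V) : SimpleGraph V :=
  G ⊔ SimpleGraph.fromEdgeSet {s(u, v)}

/-!
Suppose the edge-binomials `f_0, …, f_{N-1}`, in this order, form a d-sequence, and let
`I_i = (f_l : l < i)`. If `g * f_i ∈ I_i` and `i ≤ j`, then `(I_i : f_i f_j) = (I_i : f_j)` gives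
`g * f_j ∈ I_i`, which is absurd at a point where every `f_l` with `l < i` vanishes but `g` and
`f_j` do not. The points used give the vertices of a small set `Z` the coordinates `(0, 0)` and
every other vertex `(1, 0)` or `(0, 1)`, constantly on the components of `G` with the edge `j` and
the vertices of `Z` removed; there `f_ab` vanishes unless `a, b ∉ Z` get different colours.

Let `e` be the last edge of the cycle and `{v, z}` the last edge at `v`.
* If `e` comes first, telescoping `x_c f_ab = x_a f_cb + x_b f_ac` along the rest of the cycle
  gives `g` with `g * f_e ∈ I_e` that does not vanish when the cycle is coloured `(1, 0)`; the ends
  of `{v, z}` get different colours since it is a bridge.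
* Otherwise two more neighbours `z₁, z₂` of `v` come before `{v, z}`, and the Plücker relation puts
  `f_{z₁z₂} * f_{vz}` into `(f_{vz₁}, f_{vz₂})`. Removing `v` separates `z₁` from `z₂`, because `v`
  lies on no cycle, and removing a vertex `z₀ ∉ e` of the cycle separates the ends of `e`, because
  the cycle is unique. If there is no such `z₀ ≠ z₁`, the cycle is a triangle through `z₁` and the
  Plücker relation is applied at `z₁` instead.
-/

open SimpleGraph

section DSequence

variable {R : Type*} [CommRing R] {m : ℕ} {a : Fin m → R}

theorem IsDSequence.mul_mem_of_mul_mem (hd : IsDSequence a) {i j : Fin m} (hij : i ≤ j) {g : R}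
    (hg : g * a i ∈ Ideal.span (a '' {l | l < i})) :
    g * a j ∈ Ideal.span (a '' {l | l < i}) := by
  have hgij : g ∈ Submodule.colon (Ideal.span (a '' {l | l < i})) (Ideal.span {a i * a j}) := by
    refine Submodule.mem_colon.mpr fun x hx => ?_
    obtain ⟨r, rfl⟩ := Ideal.mem_span_singleton'.mp hx
    simpa only [smul_eq_mul, mul_left_comm g r, mul_assoc] using
      Ideal.mul_mem_left _ r (Ideal.mul_mem_right (a j) _ hg)
  rw [hd.2 i j hij] at hgij
  simpa only [smul_eq_mul] using Submodule.mem_colon.mp hgij (a j) (Ideal.mem_span_singleton_self _)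

theorem IsDSequence.map_eq_zero_of_mul_mem {K : Type*} [CommRing K] [NoZeroDivisors K]
    (hd : IsDSequence a) {i j : Fin m} (hij : i ≤ j) {g : R}
    (hg : g * a i ∈ Ideal.span (a '' {l | l < i}))
    (ψ : R →+* K) (hψ : ∀ l < i, ψ (a l) = 0) (hψg : ψ g ≠ 0) : ψ (a j) = 0 := by
  have hker : Ideal.span (a '' {l | l < i}) ≤ RingHom.ker ψ := by
    rw [Ideal.span_le]
    rintro _ ⟨l, hl, rfl⟩
    exact hψ l hl
  have := hker (hd.mul_mem_of_mul_mem hij hg)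
  rw [RingHom.mem_ker, map_mul] at this
  exact (mul_eq_zero.mp this).resolve_left hψg

end DSequence

section EdgeBinomial

variable {k : Type} [Field k] {n : ℕ}

theorem edgeBinomial_self (a : Fin n) : edgeBinomial k a a = 0 := sub_self _

theorem edgeBinomial_swap (a b : Fin n) : edgeBinomial k b a = -edgeBinomial k a b := by
  simp only [edgeBinomial]; ring

theorem edgeBinomial_eq_or_eq_neg {a b c d : Fin n} (h : s(a, b) = s(c, d)) :
    edgeBinomial k a b = edgeBinomial k c d ∨ edgeBinomial k a b = -edgeBinomial k c d := by
  rcases Sym2.eq_iff.mp h with ⟨rfl, rfl⟩ | ⟨rfl, rfl⟩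
  · exact .inl rfl
  · exact .inr (edgeBinomial_swap _ _)

theorem X_inl_mul_edgeBinomial (a b c : Fin n) :
    X (Sum.inl c) * edgeBinomial k a b =
      X (Sum.inl a) * edgeBinomial k c b + X (Sum.inl b) * edgeBinomial k a c := by
  simp only [edgeBinomial]; ring

theorem edgeBinomial_mul_edgeBinomial (a b c d : Fin n) :
    edgeBinomial k a b * edgeBinomial k c d =
      edgeBinomial k c a * edgeBinomial k d b - edgeBinomial k c b * edgeBinomial k d a := by
  simp only [edgeBinomial]; ring

theorem edgeBinomial_mul_mem {I : Ideal (MvPolynomial (Fin n ⊕ Fin n) k)} {a b c : Fin n}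
    (ha : edgeBinomial k c a ∈ I) (hb : edgeBinomial k c b ∈ I) (d : Fin n) :
    edgeBinomial k a b * edgeBinomial k c d ∈ I := by
  rw [edgeBinomial_mul_edgeBinomial]
  exact sub_mem (I.mul_mem_right _ ha) (I.mul_mem_right _ hb)

theorem exists_mul_edgeBinomial_mem_of_walk {T : SimpleGraph (Fin n)}
    {I : Ideal (MvPolynomial (Fin n ⊕ Fin n) k)} (hT : ∀ x y, T.Adj x y → edgeBinomial k x y ∈ I)
    {p : Fin n ⊕ Fin n → k} {a b : Fin n} (W : T.Walk a b)
    (hp : ∀ t ∈ W.support, p (Sum.inl t) ≠ 0) :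
    ∃ g, g * edgeBinomial k a b ∈ I ∧ eval p g ≠ 0 := by
  induction W with
  | nil => exact ⟨1, by simp [edgeBinomial_self], by simp⟩
  | @cons a c b hac W ih =>
    obtain ⟨g, hg, hgp⟩ := ih fun t ht => hp t (List.mem_cons_of_mem _ ht)
    refine ⟨X (Sum.inl c) * g, ?_, ?_⟩
    · have key : X (Sum.inl c) * g * edgeBinomial k a b =
          X (Sum.inl a) * (g * edgeBinomial k c b) + X (Sum.inl b) * g * edgeBinomial k a c := by
        linear_combination g * X_inl_mul_edgeBinomial (k := k) a b c
      rw [key]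
      exact add_mem (I.mul_mem_left _ hg) (I.mul_mem_left _ (hT a c hac))
    · rw [map_mul, eval_X]
      exact mul_ne_zero (hp c (List.mem_cons_of_mem _ W.start_mem_support)) hgp

end EdgeBinomial

section ColorPoint

variable (k : Type) [Field k] {n : ℕ}

open Classical in
noncomputable def colorPoint (Z : Set (Fin n)) (φ : Fin n → Bool) : Fin n ⊕ Fin n → k :=
  Sum.elim (fun t => if t ∉ Z ∧ φ t then 1 else 0) (fun t => if t ∉ Z ∧ φ t = false then 1 else 0)

variable {k} {Z : Set (Fin n)} {φ : Fin n → Bool}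

theorem eval_colorPoint_edgeBinomial_eq_zero {a b : Fin n} (h : a ∈ Z ∨ b ∈ Z ∨ φ a = φ b) :
    eval (colorPoint k Z φ) (edgeBinomial k a b) = 0 := by
  rcases h with h | h | h
  · simp [colorPoint, edgeBinomial, h]
  · simp [colorPoint, edgeBinomial, h]
  · cases hb : φ b <;> simp [colorPoint, edgeBinomial, h, hb]

theorem eval_colorPoint_edgeBinomial_ne_zero {a b : Fin n} (ha : a ∉ Z) (hb : b ∉ Z)
    (hab : φ a ≠ φ b) : eval (colorPoint k Z φ) (edgeBinomial k a b) ≠ 0 := by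
  cases h : φ a <;> cases h' : φ b <;> simp_all [colorPoint, edgeBinomial]

end ColorPoint

theorem exists_bool_separating {X : Type*} {A B C D : X} (hAB : A ≠ B) (hCD : C ≠ D) (E : X) :
    ∃ ψ : X → Bool, ψ A ≠ ψ B ∧ ψ C ≠ ψ D ∧ ψ E = true := by
  classical
  suffices ∃ ψ : X → Bool, ψ A ≠ ψ B ∧ ψ C ≠ ψ D by
    obtain ⟨ψ, hA, hC⟩ := this
    refine ⟨fun x => ψ x == ψ E, ?_, ?_, by simp⟩ <;>
      cases ψ A <;> cases ψ B <;> cases ψ C <;> cases ψ D <;> cases ψ E <;> simp_all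
  by_cases hBC : B = C
  · subst hBC
    exact ⟨fun x => decide (x = A ∨ x = D), by simp [hAB.symm, hCD], by simp [hAB.symm, hCD]⟩
  by_cases hDA : D = A
  · exact ⟨fun x => decide (x = A), by simp [hAB.symm], by simp [← hDA, hCD]⟩
  · exact ⟨fun x => decide (x = A ∨ x = C), by simp [hAB.symm, hBC], by simp [hDA, hCD.symm]⟩

namespace SimpleGraph

variable {V : Type*} {G H : SimpleGraph V}

theorem exists_bool_separating_of_not_reachable {a b c d : V} (hab : ¬H.Reachable a b)
    (hcd : ¬H.Reachable c d) (e : V) :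
    ∃ φ : V → Bool, (∀ x y, H.Reachable x y → φ x = φ y) ∧ φ a ≠ φ b ∧ φ c ≠ φ d ∧ φ e = true := by
  obtain ⟨ψ, hψ⟩ := exists_bool_separating (ConnectedComponent.eq.not.mpr hab)
    (ConnectedComponent.eq.not.mpr hcd) (H.connectedComponentMk e)
  exact ⟨fun x => ψ (H.connectedComponentMk x),
    fun x y h => congrArg ψ (ConnectedComponent.sound h), hψ⟩

def isolateVerts (G : SimpleGraph V) (Z : Set V) : SimpleGraph V where
  Adj x y := G.Adj x y ∧ x ∉ Z ∧ y ∉ Z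
  symm := ⟨fun _ _ h => ⟨h.1.symm, h.2.2, h.2.1⟩⟩
  loopless := ⟨fun x h => G.loopless.irrefl x h.1⟩

variable {Z : Set V}

@[simp]
theorem isolateVerts_adj {x y : V} : (G.isolateVerts Z).Adj x y ↔ G.Adj x y ∧ x ∉ Z ∧ y ∉ Z :=
  .rfl

theorem isolateVerts_le : G.isolateVerts Z ≤ G := fun _ _ h => h.1

theorem deleteEdges_isolateVerts_le {z : V} (hz : z ∈ Z) (F : Set (Sym2 V)) (a : V) :
    (G.deleteEdges F).isolateVerts Z ≤ G.deleteEdges {s(z, a)} := by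
  rintro x y ⟨hxy, hx, hy⟩
  refine deleteEdges_adj.mpr ⟨(deleteEdges_adj.mp hxy).1, fun h => ?_⟩
  rcases Sym2.eq_iff.mp h with ⟨rfl, -⟩ | ⟨-, rfl⟩
  · exact hx hz
  · exact hy hz

theorem IsBridge.not_reachable_of_adj {a b c : V} (hbr : G.IsBridge s(c, a)) (hcb : G.Adj c b)
    (hab : a ≠ b) : ¬(G.deleteEdges {s(c, a)}).Reachable a b := by
  intro h
  have hbc : (G.deleteEdges {s(c, a)}).Adj b c := by
    refine deleteEdges_adj.mpr ⟨hcb.symm, fun he => ?_⟩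
    rcases Sym2.eq_iff.mp he with ⟨rfl, -⟩ | ⟨rfl, -⟩
    · exact hcb.ne rfl
    · exact hab rfl
  exact isBridge_iff.mp hbr (h.trans hbc.reachable).symm

theorem isBridge_of_forall_isCycle {v z : V} (hv : ∀ u (w : G.Walk u u), w.IsCycle → v ∉ w.support)
    (h : G.Adj v z) : G.IsBridge s(v, z) :=
  (isBridge_iff_forall_cycle_notMem h).mpr fun _ p hp he =>
    hv _ p hp (p.fst_mem_support_of_mem_edges he)

theorem eq_of_adj_of_mem_support {v r s x y : V}
    (hv : ∀ u (w : G.Walk u u), w.IsCycle → v ∉ w.support) {c : G.Walk x y}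
    (hvc : v ∉ c.support) (hr : r ∈ c.support) (hs : s ∈ c.support) (hvr : G.Adj v r)
    (hvs : G.Adj v s) : r = s := by
  classical
  by_contra hrs
  refine (isBridge_of_forall_isCycle hv hvr).not_reachable_of_adj hvs hrs ?_
  let c' := c.transfer (G.deleteEdges {s(v, r)}) fun e he => by
    rw [edgeSet_deleteEdges]
    exact ⟨c.edges_subset_edgeSet he, fun h => hvc (c.fst_mem_support_of_mem_edges (h ▸ he))⟩
  have hr' : r ∈ c'.support := by rwa [c.support_transfer]
  have hs' : s ∈ c'.support := by rwa [c.support_transfer]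
  exact (c'.takeUntil r hr').reachable.symm.trans (c'.takeUntil s hs').reachable

theorem _root_.IsUnicyclic.mem_support_of_isCycle (huni : IsUnicyclic G) {x y z : V}
    {c : G.Walk x x} {c' : G.Walk y y} (hc : c.IsCycle) (hc' : c'.IsCycle) (hz : z ∈ c.support) :
    z ∈ c'.support := by
  obtain ⟨S, -, hS⟩ := huni
  have hedges : {e | e ∈ c.edges} = {e | e ∈ c'.edges} :=
    (hS _ ⟨x, c, hc, rfl⟩).trans (hS _ ⟨y, c', hc', rfl⟩).symm
  obtain ⟨e, he, hze⟩ := (Walk.mem_support_iff_exists_mem_edges_of_not_nil hc.not_nil).mp hz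
  exact (Walk.mem_support_iff_exists_mem_edges_of_not_nil hc'.not_nil).mpr
    ⟨e, (Set.ext_iff.mp hedges e).mp he, hze⟩

theorem _root_.IsUnicyclic.isAcyclic_isolateVerts (huni : IsUnicyclic G) {x z : V}
    {c : G.Walk x x} (hc : c.IsCycle) (hz : z ∈ c.support) : (G.isolateVerts {z}).IsAcyclic := by
  intro y c' hc'
  have hz' := huni.mem_support_of_isCycle hc (hc'.mapLe isolateVerts_le) hz
  rw [Walk.support_mapLe_eq_support,
    Walk.mem_support_iff_exists_mem_edges_of_not_nil hc'.not_nil] at hz'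
  obtain ⟨e, he, hze⟩ := hz'
  have hadj := c'.edges_subset_edgeSet he
  induction e with
  | h a b =>
    rcases Sym2.mem_iff.mp hze with rfl | rfl
    · exact hadj.2.1 rfl
    · exact hadj.2.2 rfl

theorem _root_.IsUnicyclic.not_reachable_isolateVerts (huni : IsUnicyclic G) {x z u w : V}
    {c : G.Walk x x} (hc : c.IsCycle) (hz : z ∈ c.support) (hzZ : z ∈ Z) (huw : G.Adj u w)
    (hu : u ∉ Z) (hw : w ∉ Z) : ¬((G.deleteEdges {s(u, w)}).isolateVerts Z).Reachable u w := by
  have hbr := isAcyclic_iff_forall_adj_isBridge.mp (huni.isAcyclic_isolateVerts hc hz)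
    (isolateVerts_adj.mpr ⟨huw, fun h => hu (h ▸ hzZ), fun h => hw (h ▸ hzZ)⟩)
  refine fun h => isBridge_iff.mp hbr (h.mono fun x y hxy => ?_)
  simp only [isolateVerts_adj, deleteEdges_adj] at hxy ⊢
  exact ⟨⟨hxy.1.1, fun h => hxy.2.1 (h ▸ hzZ), fun h => hxy.2.2 (h ▸ hzZ)⟩, hxy.1.2⟩

theorem Walk.IsCycle.reachable_deleteEdges {x a b : V} {c : G.Walk x x} (hc : c.IsCycle)
    (he : s(a, b) ∈ c.edges) :
    ((fromEdgeSet {e | e ∈ c.edges}).deleteEdges {s(a, b)}).Reachable a b := by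
  have hsub : ∀ e ∈ c.edges, e ∈ (fromEdgeSet {e | e ∈ c.edges}).edgeSet := fun e he' => by
    rw [edgeSet_fromEdgeSet]
    exact ⟨he', G.not_isDiag_of_mem_edgeSet (c.edges_subset_edgeSet he')⟩
  exact (adj_and_reachable_delete_edges_iff_exists_cycle.mpr
    ⟨x, c.transfer _ hsub, hc.transfer hsub, by rwa [c.edges_transfer]⟩).2

theorem Walk.IsCycle.mem_edges_of_support_subset {x y a b : V} {c : G.Walk y y} (hc : c.IsCycle)
    (hx : x ∈ c.support) (hsub : ∀ t ∈ c.support, t = x ∨ t = a ∨ t = b) :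
    s(x, a) ∈ c.edges ∧ s(x, b) ∈ c.edges := by
  have hN : c.toSubgraph.neighborSet x ⊆ {a, b} := fun t ht => by
    rcases hsub t (Walk.mem_support_of_adj_toSubgraph (Subgraph.adj_symm _ ht)) with h | h
    · exact absurd h (Subgraph.Adj.ne ht).symm
    · exact h
  have hNab := Set.eq_of_subset_of_ncard_le hN
    ((Set.ncard_insert_le _ _).trans (by simp [hc.ncard_neighborSet_toSubgraph_eq_two hx]))
  rw [← Walk.adj_toSubgraph_iff_mem_edges, ← Walk.adj_toSubgraph_iff_mem_edges]
  exact ⟨(hNab ▸ Set.mem_insert a {b} : a ∈ c.toSubgraph.neighborSet x),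
    (hNab ▸ Set.mem_insert_of_mem a rfl : b ∈ c.toSubgraph.neighborSet x)⟩

theorem exists_two_neighbors_of_three_le_degr {v x y : V}
    (hv : ∀ u (w : G.Walk u u), w.IsCycle → v ∉ w.support) {c : G.Walk x y}
    (hvc : v ∉ c.support) (hdeg : 3 ≤ degr G v) (z : V) :
    ∃ z₁ z₂, G.Adj v z₁ ∧ G.Adj v z₂ ∧ z₁ ≠ z₂ ∧ z₁ ≠ z ∧ z₂ ≠ z ∧ z₂ ∉ c.support := by
  have h2 : 1 < (G.neighborSet v \ {z}).ncard :=
    lt_of_lt_of_le (by unfold degr at hdeg; omega) (Set.pred_ncard_le_ncard_sdiff_singleton _ _)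
  obtain ⟨o₁, o₂, ⟨ho₁, ho₁z⟩, ⟨ho₂, ho₂z⟩, h12⟩ :=
    (Set.one_lt_ncard_iff (Set.finite_of_ncard_pos (by omega))).mp h2
  by_cases h₂ : o₂ ∈ c.support
  · by_cases h₁ : o₁ ∈ c.support
    · exact absurd (eq_of_adj_of_mem_support hv hvc h₁ h₂ ho₁ ho₂) h12
    · exact ⟨o₂, o₁, ho₂, ho₁, h12.symm, ho₂z, ho₁z, h₁⟩
  · exact ⟨o₁, o₂, ho₁, ho₂, h12, ho₁z, ho₂z, h₂⟩

end SimpleGraph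

section Enumeration

variable {k : Type} [Field k] {n N : ℕ} {G : SimpleGraph (Fin n)} {α β : Fin N → Fin n}

variable (k) in
noncomputable def edgeIdealBefore (α β : Fin N → Fin n) (i : Fin N) :
    Ideal (MvPolynomial (Fin n ⊕ Fin n) k) :=
  Ideal.span ((fun t => edgeBinomial k (α t) (β t)) '' {l | l < i})

theorem edgeBinomial_mem_edgeIdealBefore {i t : Fin N} (ht : t < i) {x y : Fin n}
    (h : s(α t, β t) = s(x, y)) : edgeBinomial k x y ∈ edgeIdealBefore k α β i := by
  have hmem : edgeBinomial k (α t) (β t) ∈ edgeIdealBefore k α β i :=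
    Ideal.subset_span ⟨t, ht, rfl⟩
  rcases edgeBinomial_eq_or_eq_neg (k := k) h with h' | h' <;> rw [h'] at hmem
  · exact hmem
  · simpa using neg_mem hmem

namespace IsEdgeEnumeration

theorem adj (hE : IsEdgeEnumeration G α β) {t : Fin N} {x y : Fin n}
    (h : s(α t, β t) = s(x, y)) : G.Adj x y :=
  G.mem_edgeSet.mp (h ▸ G.mem_edgeSet.mpr (hE.1 t))

theorem exists_index_lt (hE : IsEdgeEnumeration G α β) {x y : Fin n} (h : G.Adj x y) {i : Fin N}
    (hle : ∀ t, s(α t, β t) = s(x, y) → t ≤ i) (hne : s(α i, β i) ≠ s(x, y)) :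
    ∃ t < i, s(α t, β t) = s(x, y) := by
  obtain ⟨t, ht⟩ := hE.2.1 _ (G.mem_edgeSet.mpr h)
  exact ⟨t, (hle t ht.symm).lt_of_ne (by rintro rfl; exact hne ht.symm), ht.symm⟩

theorem not_isDSequence_of_colorPoint (hE : IsEdgeEnumeration G α β) {i j : Fin N} (hij : i < j)
    {a b x y : Fin n} (hi : s(α i, β i) = s(a, b)) (hj : s(α j, β j) = s(x, y))
    {g : MvPolynomial (Fin n ⊕ Fin n) k} (hg : g * edgeBinomial k a b ∈ edgeIdealBefore k α β i)
    {Z : Set (Fin n)} {φ : Fin n → Bool}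
    (hφ : ∀ u w, ((G.deleteEdges {s(x, y)}).isolateVerts Z).Reachable u w → φ u = φ w)
    (hgφ : eval (colorPoint k Z φ) g ≠ 0) (hx : x ∉ Z) (hy : y ∉ Z) (hxy : φ x ≠ φ y) :
    ¬IsDSequence (fun t => edgeBinomial k (α t) (β t)) := by
  intro hd
  have hgi : g * edgeBinomial k (α i) (β i) ∈ edgeIdealBefore k α β i := by
    rcases edgeBinomial_eq_or_eq_neg (k := k) hi with h | h <;> rw [h]
    · exact hg
    · simpa using neg_mem hg
  have hkill : ∀ l < i, eval (colorPoint k Z φ) (edgeBinomial k (α l) (β l)) = 0 := by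
    intro l hl
    refine eval_colorPoint_edgeBinomial_eq_zero ?_
    by_contra! h
    refine h.2.2 (hφ _ _ (Adj.reachable ?_))
    refine isolateVerts_adj.mpr ⟨deleteEdges_adj.mpr ⟨hE.1 l, fun he => ?_⟩, h.1, h.2.1⟩
    exact (hl.trans hij).ne (hE.2.2 (he.trans hj.symm))
  have hj0 := hd.map_eq_zero_of_mul_mem hij.le hgi (eval (colorPoint k Z φ)) hkill hgφ
  have hxy0 := eval_colorPoint_edgeBinomial_ne_zero (k := k) hx hy hxy
  rcases edgeBinomial_eq_or_eq_neg (k := k) hj with h | h <;> simp_all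

theorem not_isDSequence_of_plucker (hE : IsEdgeEnumeration G α β) {Z : Set (Fin n)}
    {i j ta tb : Fin N} (hij : i < j) (hta : ta < i) (htb : tb < i) {o a b d u w : Fin n}
    (ha : s(α ta, β ta) = s(o, a)) (hb : s(α tb, β tb) = s(o, b)) (hi : s(α i, β i) = s(o, d))
    (hj : s(α j, β j) = s(u, w))
    (hab : ¬((G.deleteEdges {s(u, w)}).isolateVerts Z).Reachable a b)
    (huw : ¬((G.deleteEdges {s(u, w)}).isolateVerts Z).Reachable u w)
    (haZ : a ∉ Z) (hbZ : b ∉ Z) (huZ : u ∉ Z) (hwZ : w ∉ Z) :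
    ¬IsDSequence (fun t => edgeBinomial k (α t) (β t)) := by
  obtain ⟨φ, hφ, hφab, hφuw, -⟩ := exists_bool_separating_of_not_reachable hab huw a
  exact hE.not_isDSequence_of_colorPoint hij hi hj
    (edgeBinomial_mul_mem (edgeBinomial_mem_edgeIdealBefore hta ha)
      (edgeBinomial_mem_edgeIdealBefore htb hb) d)
    hφ (eval_colorPoint_edgeBinomial_ne_zero haZ hbZ hφab) huZ hwZ hφuw

variable {v x : Fin n} {c : G.Walk x x}

theorem not_isDSequence_of_lastCycleEdge_lt_bridge (hE : IsEdgeEnumeration G α β)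
    (hc : c.IsCycle) {i j : Fin N} (hi : s(α i, β i) ∈ c.edges)
    (himax : ∀ t, s(α t, β t) ∈ c.edges → t ≤ i) (hbr : G.IsBridge s(α j, β j)) (hij : i < j) :
    ¬IsDSequence (fun t => edgeBinomial k (α t) (β t)) := by
  set H := (G.deleteEdges {s(α j, β j)}).isolateVerts ∅
  have hj : ¬H.Reachable (α j) (β j) := fun h => isBridge_iff.mp hbr (h.mono isolateVerts_le)
  obtain ⟨φ, hφ, hφj, -, hφi⟩ := exists_bool_separating_of_not_reachable hj hj (α i)
  set T := (fromEdgeSet {e | e ∈ c.edges}).deleteEdges {s(α i, β i)}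
  have hTH : T ≤ H := fun y z hyz => by
    simp only [T, H, deleteEdges_adj, fromEdgeSet_adj, Set.mem_ofPred_eq, Set.mem_singleton_iff,
      isolateVerts_adj, Set.mem_empty_iff_false, not_false_eq_true, and_true] at hyz ⊢
    exact ⟨c.adj_of_mem_edges hyz.1.1, fun h => hbr.notMem_edges_of_isCycle hc (h ▸ hyz.1.1)⟩
  have hT : ∀ y z, T.Adj y z → edgeBinomial k y z ∈ edgeIdealBefore k α β i := by
    intro y z hyz
    simp only [T, deleteEdges_adj, fromEdgeSet_adj, Set.mem_ofPred_eq, Set.mem_singleton_iff]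
      at hyz
    obtain ⟨t, ht, he⟩ := hE.exists_index_lt (c.adj_of_mem_edges hyz.1.1)
      (fun t ht => himax t (ht ▸ hyz.1.1)) (Ne.symm hyz.2)
    exact edgeBinomial_mem_edgeIdealBefore ht he
  obtain ⟨W⟩ := hc.reachable_deleteEdges hi
  obtain ⟨g, hg, hgφ⟩ := exists_mul_edgeBinomial_mem_of_walk hT (p := colorPoint k ∅ φ) W
    fun t ht => by
      have : φ t = true := (hφ _ _ ((W.takeUntil t ht).reachable.mono hTH)).symm.trans hφi
      simp [colorPoint, this]
  exact hE.not_isDSequence_of_colorPoint hij rfl rfl hg hφ hgφ (Set.notMem_empty _)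
    (Set.notMem_empty _) hφj

theorem not_isDSequence_of_two_earlier_edges (hE : IsEdgeEnumeration G α β)
    (hv : ∀ u (w : G.Walk u u), w.IsCycle → v ∉ w.support) (huni : IsUnicyclic G)
    (hc : c.IsCycle) {z₀ z₁ z₂ z₃ : Fin n} (hz₀ : z₀ ∈ c.support) {t₁ t₂ i j : Fin N}
    (he₁ : s(α t₁, β t₁) = s(v, z₁)) (he₂ : s(α t₂, β t₂) = s(v, z₂))
    (hi : s(α i, β i) = s(v, z₃)) (hj : s(α j, β j) ∈ c.edges) (ht₁ : t₁ < i) (ht₂ : t₂ < i)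
    (hij : i < j) (hz₁₂ : z₁ ≠ z₂) (hz₀₁ : z₀ ≠ z₁) (hz₀₂ : z₀ ≠ z₂) (hz₀u : z₀ ≠ α j)
    (hz₀w : z₀ ≠ β j) : ¬IsDSequence (fun t => edgeBinomial k (α t) (β t)) := by
  have hvc := hv _ c hc
  have hvu : v ≠ α j := fun h => hvc (h ▸ c.fst_mem_support_of_mem_edges hj)
  have hvw : v ≠ β j := fun h => hvc (h ▸ c.snd_mem_support_of_mem_edges hj)
  have hv₁ := hE.adj he₁
  have hv₂ := hE.adj he₂
  have hz₁₂' : ¬((G.deleteEdges {s(α j, β j)}).isolateVerts {v, z₀}).Reachable z₁ z₂ := fun h =>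
    (isBridge_of_forall_isCycle hv hv₁).not_reachable_of_adj hv₂ hz₁₂
      (h.mono (deleteEdges_isolateVerts_le (Set.mem_insert v _) _ _))
  have huw := huni.not_reachable_isolateVerts hc hz₀
    (Set.mem_insert_of_mem v (Set.mem_singleton z₀)) (hE.1 j) (by simp [hvu.symm, hz₀u.symm])
    (by simp [hvw.symm, hz₀w.symm])
  exact hE.not_isDSequence_of_plucker hij ht₁ ht₂ he₁ he₂ hi rfl hz₁₂' huw
    (by simp [hv₁.ne.symm, hz₀₁.symm]) (by simp [hv₂.ne.symm, hz₀₂.symm])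
    (by simp [hvu.symm, hz₀u.symm]) (by simp [hvw.symm, hz₀w.symm])

theorem not_isDSequence_of_triangle_of_lt (hE : IsEdgeEnumeration G α β)
    (hv : ∀ u (w : G.Walk u u), w.IsCycle → v ∉ w.support) (huni : IsUnicyclic G)
    (hc : c.IsCycle) {r u w : Fin n} (hr : r ∈ c.support) (hru : r ≠ u) (hrw : r ≠ w)
    (hvu : v ≠ u) (hvw : v ≠ w) {tv tu tw j : Fin N} (hev : s(α tv, β tv) = s(r, v))
    (heu : s(α tu, β tu) = s(r, u)) (hew : s(α tw, β tw) = s(r, w))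
    (hj : s(α j, β j) = s(u, w)) (hwu : tw < tu) (huj : tu < j) (hvj : tv < j) :
    ¬IsDSequence (fun t => edgeBinomial k (α t) (β t)) := by
  have hrv := hE.adj hev
  have huw :=
    huni.not_reachable_isolateVerts hc hr (Set.mem_singleton r) (hE.adj hj) hru.symm hrw.symm
  have htvu : tv ≠ tu := by
    rintro rfl
    exact hvu (by simpa [hru] using hev.symm.trans heu)
  rcases lt_or_gt_of_ne htvu with hvu' | huv'
  · have hbr : G.IsBridge s(r, v) := Sym2.eq_swap ▸ isBridge_of_forall_isCycle hv hrv.symm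
    have hvw' : ¬((G.deleteEdges {s(u, w)}).isolateVerts {r}).Reachable w v := fun h =>
      hbr.not_reachable_of_adj (hE.adj hew) hvw
        (h.symm.mono (deleteEdges_isolateVerts_le (Set.mem_singleton r) _ _))
    exact hE.not_isDSequence_of_plucker huj hwu hvu' hew hev heu hj hvw' huw hrw.symm
      hrv.ne.symm hru.symm hrw.symm
  · exact hE.not_isDSequence_of_plucker hvj huv' (hwu.trans huv') heu hew hev hj huw huw
      hru.symm hrw.symm hru.symm hrw.symm

theorem not_isDSequence_of_triangle (hE : IsEdgeEnumeration G α β)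
    (hv : ∀ u (w : G.Walk u u), w.IsCycle → v ∉ w.support) (huni : IsUnicyclic G)
    (hc : c.IsCycle) {r u w : Fin n} (hu : s(r, u) ∈ c.edges) (hw : s(r, w) ∈ c.edges)
    {tv j : Fin N} (hev : s(α tv, β tv) = s(r, v)) (hj : s(α j, β j) = s(u, w))
    (hjmax : ∀ t, s(α t, β t) ∈ c.edges → t ≤ j) (hvj : tv < j) :
    ¬IsDSequence (fun t => edgeBinomial k (α t) (β t)) := by
  have hvc := hv _ c hc
  have hr : r ∈ c.support := c.fst_mem_support_of_mem_edges hu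
  have hru : r ≠ u := (c.adj_of_mem_edges hu).ne
  have hrw : r ≠ w := (c.adj_of_mem_edges hw).ne
  have hvu : v ≠ u := fun h => hvc (h ▸ c.snd_mem_support_of_mem_edges hu)
  have hvw : v ≠ w := fun h => hvc (h ▸ c.snd_mem_support_of_mem_edges hw)
  obtain ⟨tu, htu, heu⟩ := hE.exists_index_lt (c.adj_of_mem_edges hu)
    (fun t ht => hjmax t (ht ▸ hu)) (by simp [hj, hru.symm, hrw.symm])
  obtain ⟨tw, htw, hew⟩ := hE.exists_index_lt (c.adj_of_mem_edges hw)
    (fun t ht => hjmax t (ht ▸ hw)) (by simp [hj, hru.symm, hrw.symm])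
  have htuw : tu ≠ tw := by
    rintro rfl
    exact (hE.adj hj).ne (by simpa [hrw] using heu.symm.trans hew)
  rcases lt_or_gt_of_ne htuw with h | h
  · exact hE.not_isDSequence_of_triangle_of_lt hv huni hc hr hrw hru hvw hvu hev hew heu
      (hj.trans Sym2.eq_swap) h htw hvj
  · exact hE.not_isDSequence_of_triangle_of_lt hv huni hc hr hru hrw hvu hvw hev heu hew hj h
      htu hvj

theorem not_isDSequence_of_lastEdgeAt_lt_lastCycleEdge (hE : IsEdgeEnumeration G α β)
    (hv : ∀ u (w : G.Walk u u), w.IsCycle → v ∉ w.support) (huni : IsUnicyclic G)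
    (hc : c.IsCycle) (hdeg : 3 ≤ degr G v) {i j : Fin N} {z : Fin n}
    (hi : s(α i, β i) = s(v, z)) (himax : ∀ t, v ∈ s(α t, β t) → t ≤ i)
    (hj : s(α j, β j) ∈ c.edges) (hjmax : ∀ t, s(α t, β t) ∈ c.edges → t ≤ j) (hij : i < j) :
    ¬IsDSequence (fun t => edgeBinomial k (α t) (β t)) := by
  obtain ⟨z₁, z₂, hz₁, hz₂, hz₁₂, hz₁z, hz₂z, hz₂c⟩ :=
    exists_two_neighbors_of_three_le_degr hv (hv _ c hc) hdeg z
  have hbefore : ∀ {y}, G.Adj v y → y ≠ z → ∃ t < i, s(α t, β t) = s(v, y) := fun hy hyz =>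
    hE.exists_index_lt hy (fun t ht => himax t (ht ▸ Sym2.mem_mk_left _ _))
      (by simp [hi, hyz.symm, hy.ne])
  obtain ⟨t₁, ht₁, he₁⟩ := hbefore hz₁ hz₁z
  obtain ⟨t₂, ht₂, he₂⟩ := hbefore hz₂ hz₂z
  by_cases h : ∃ z₀ ∈ c.support, z₀ ≠ α j ∧ z₀ ≠ β j ∧ z₀ ≠ z₁
  · obtain ⟨z₀, hz₀, hz₀u, hz₀w, hz₀₁⟩ := h
    exact hE.not_isDSequence_of_two_earlier_edges hv huni hc hz₀ he₁ he₂ hi hj ht₁ ht₂ hij hz₁₂ hz₀₁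
      (fun h => hz₂c (h ▸ hz₀)) hz₀u hz₀w
  · -- the cycle is the triangle `α j, β j, z₁`
    push Not at h
    have hu := (hc.mem_edges_of_support_subset (c.fst_mem_support_of_mem_edges hj)
      (a := z₁) (b := β j) fun t ht => by grind).1
    have hw := (hc.mem_edges_of_support_subset (c.snd_mem_support_of_mem_edges hj)
      (a := z₁) (b := α j) fun t ht => by grind).1
    rw [Sym2.eq_swap] at hu hw
    exact hE.not_isDSequence_of_triangle hv huni hc hu hw (he₁.trans Sym2.eq_swap) rfl hjmax
      (ht₁.trans hij)

end IsEdgeEnumeration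

end Enumeration

theorem not_dSequence_of_degree_three_off_cycle_general (k : Type) [Field k] {n : ℕ}
    (G : SimpleGraph (Fin n)) (huni : IsUnicyclic G)
    (v : Fin n) (hdeg : 3 ≤ degr G v)
    (hoff : ∀ (u : Fin n) (w : G.Walk u u), w.IsCycle → v ∉ w.support) :
    ¬ EdgeBinomialsFormDSequence k G := by
  rintro ⟨N, α, β, hE, hd⟩
  obtain ⟨-, x, c, hc, -⟩ := huni.exists
  obtain ⟨e, he⟩ := c.edges.exists_mem_of_ne_nil (by simp [hc.not_nil])
  obtain ⟨t, rfl⟩ := hE.2.1 e (c.edges_subset_edgeSet he)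
  obtain ⟨j, hj : s(α j, β j) ∈ c.edges, hjmax⟩ :=
    Set.exists_max_image {t | s(α t, β t) ∈ c.edges} id (Set.toFinite _) ⟨t, he⟩
  obtain ⟨y, hy⟩ := Set.nonempty_of_ncard_ne_zero (s := G.neighborSet v)
    (by unfold degr at hdeg; omega)
  obtain ⟨t', ht'⟩ := hE.2.1 _ (G.mem_edgeSet.mpr hy)
  obtain ⟨i, hi : v ∈ s(α i, β i), himax⟩ := Set.exists_max_image {t | v ∈ s(α t, β t)} id
    (Set.toFinite _) ⟨t', show v ∈ s(α t', β t') from ht' ▸ Sym2.mem_mk_left v y⟩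
  obtain ⟨z, hz⟩ := Sym2.mem_iff_exists.mp hi
  rcases lt_trichotomy j i with hji | rfl | hij
  · exact hE.not_isDSequence_of_lastCycleEdge_lt_bridge hc hj hjmax
      (hz ▸ isBridge_of_forall_isCycle hoff (hE.adj hz)) hji hd
  · exact hoff x c hc (c.fst_mem_support_of_mem_edges (hz ▸ hj))
  · exact hE.not_isDSequence_of_lastEdgeAt_lt_lastCycleEdge hoff huni hc hdeg hz himax hj hjmax
      hij hd

/-- Let `G` be a connected unicyclic graph on `n` vertices having
a vertex of degree at least `3` which does not lie on the unique cycle of `G`.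
Then no enumeration of the edge-binomials of `G` forms a d-sequence in `S`. -/
theorem not_dSequence_of_degree_three_off_cycle (k : Type) [Field k] {n : ℕ}
    (G : SimpleGraph (Fin n)) (hconn : G.Connected) (huni : IsUnicyclic G)
    (v : Fin n) (hdeg : 3 ≤ degr G v)
    (hoff : ∀ (u : Fin n) (w : G.Walk u u), w.IsCycle → v ∉ w.support) :
    ¬ EdgeBinomialsFormDSequence k G :=
  not_dSequence_of_degree_three_off_cycle_general k G huni v hdeg hoff
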